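/- arXiv:1206.1580 — 10 statements merged into one kernel-verified Lean document; each statement's English description precedes it below -/
import Mathlib

section
/- Over the Boolean semiring B = {0,1} (with 1 + 1 = 1), there exist no irreducible left B-semimodules: if M is a nonzero cancellative left B-semimodule, then B·M = 0. Consequently B itself (as the regular semimodule) is a simple B-semimodule with zero annihilator, while B has no faithful irreducible semimodule. -/
/-- Over the Boolean semiring `B = {0,1}` with `1 + 1 = 1`:
(a) every cancellative left `B`-semimodule is annihilated by `B` (so there are no
irreducible `B`-semimodules); (b) the regular semimodule `B` is simple with zero
annihilator; (c) `B` has no faithful irreducible left semimodule. -/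
theorem stmt_2 {B : Type} [Semiring B]
    (htwo : ∀ b : B, b = 0 ∨ b = 1) (hnz : (0 : B) ≠ 1) (hidem : (1 : B) + 1 = 1) :
    -- (a) no irreducible semimodules: cancellative semimodules are annihilated
    (∀ (M : Type) [AddCommMonoid M], ∀ c : B → M → M,
      (∀ r r' m, c (r + r') m = c r m + c r' m) →
      (∀ m : M, c 0 m = 0) →
      (∀ x y z : M, x + z = y + z → x = y) →
      ∀ b m, c b m = 0) ∧
    -- (b) the regular semimodule `B` is simple with zero annihilator
    ((∃ b x : B, b * x ≠ 0) ∧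
      (∀ N : Set B, (0 : B) ∈ N → (∀ a ∈ N, ∀ b ∈ N, a + b ∈ N) →
        (∀ r : B, ∀ a ∈ N, r * a ∈ N) → N = {0} ∨ N = Set.univ) ∧
      (∀ rel : B → B → Prop, Equivalence rel →
        (∀ a b d, rel a b → rel (a + d) (b + d)) →
        (∀ (r : B) a b, rel a b → rel (r * a) (r * b)) →
        (∀ a b, rel a b ↔ a = b) ∨ (∀ a b, rel a b)) ∧
      (∀ b : B, (∀ x : B, b * x = 0) → b = 0)) ∧
    -- (c) no faithful irreducible semimodule
    ¬ ∃ (M : Type) (_ : AddCommMonoid M) (c : B → M → M),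
        (∀ r r' m, c (r + r') m = c r m + c r' m) ∧
        (∀ m : M, c 0 m = 0) ∧
        (∀ x y z : M, x + z = y + z → x = y) ∧
        (∃ m : M, m ≠ 0) ∧
        (∀ m₁ m₂ : M, m₁ ≠ m₂ → ∀ m : M, ∃ r₁ r₂ : B,
          m + (c r₁ m₁ + c r₂ m₂) = c r₁ m₂ + c r₂ m₁) ∧
        (∀ b : B, (∀ m : M, c b m = 0) → b = 0) := by

  have key : ∀ (M : Type) [AddCommMonoid M], ∀ c : B → M → M,
      (∀ r r' m, c (r + r') m = c r m + c r' m) →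
      (∀ m : M, c 0 m = 0) →
      (∀ x y z : M, x + z = y + z → x = y) →
      ∀ b m, c b m = 0 := by
    intro M _ c hadd hzero hcanc b m
    rcases htwo b with rfl | rfl
    · exact hzero m
    · have h1 : c 1 m = c 1 m + c 1 m := by
        have := hadd 1 1 m
        rw [hidem] at this
        exact this
      apply hcanc _ _ (c 1 m)
      rw [← h1, zero_add]
  refine ⟨key, ⟨⟨1, 1, by simp [hnz.symm]⟩, ?_, ?_, ?_⟩, ?_⟩
  · intro N h0 _ hmul
    by_cases h1 : (1 : B) ∈ N
    · right
      ext x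
      simp only [Set.mem_univ, iff_true]
      rcases htwo x with rfl | rfl
      · exact h0
      · exact h1
    · left
      ext x
      simp only [Set.mem_singleton_iff]
      constructor
      · intro hx
        rcases htwo x with rfl | rfl
        · rfl
        · exact absurd hx h1
      · rintro rfl; exact h0
  · intro rel heq hadd _
    by_cases h01 : rel 0 1
    · right
      intro a b
      rcases htwo a with rfl | rfl <;> rcases htwo b with rfl | rfl
      · exact heq.refl 0
      · exact h01
      · exact heq.symm h01
      · exact heq.refl 1
    · left
      intro a b
      constructor
      · intro hab
        rcases htwo a with rfl | rfl <;> rcases htwo b with rfl | rfl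
        · rfl
        · exact absurd hab h01
        · exact absurd (heq.symm hab) h01
        · rfl
      · rintro rfl; exact heq.refl a
  · intro b hb
    have := hb 1
    rwa [mul_one] at this
  · rintro ⟨M, _, c, hadd, hzero, hcanc, ⟨m, hm⟩, _, hfaith⟩
    have h0 : ∀ m : M, c 1 m = 0 := fun m => key M c hadd hzero hcanc 1 m
    exact hnz (hfaith 1 h0).symm
end

section
/- If M is an irreducible left R-semimodule over a hemiring R and e ∈ R is an additive idempotent (e + e = e), then eM = 0. Consequently, if R is additively regular (for every a ∈ R there is b with a + b + a = a) and R has a faithful irreducible left semimodule, then 0 is the only additive idempotent of R, and R is in fact a ring. -/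
/-- If `M` is an irreducible left semimodule over a hemiring `R` and
`e ∈ R` is an additive idempotent, then `eM = 0`. Consequently, if `R` is additively
regular and `M` is faithful, then `0` is the only additive idempotent of `R` and `R`
is a ring (every element has an additive inverse). -/
theorem stmt_3 {R M : Type*} [NonUnitalSemiring R] [AddCommMonoid M]
    (c : R → M → M)
    (hcadd : ∀ r r' m, c (r + r') m = c r m + c r' m)
    (hcmul : ∀ r r' m, c (r * r') m = c r (c r' m))
    (hcdist : ∀ r m m', c r (m + m') = c r m + c r m')
    (hc0 : ∀ r, c r 0 = 0) (hc0' : ∀ m, c 0 m = 0)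
    (hcanc : ∀ x y z : M, x + z = y + z → x = y)
    (hM0 : ∃ m : M, m ≠ 0)
    (hirr : ∀ m₁ m₂ : M, m₁ ≠ m₂ → ∀ m : M, ∃ r₁ r₂ : R,
      m + (c r₁ m₁ + c r₂ m₂) = c r₁ m₂ + c r₂ m₁) :
    (∀ e : R, e + e = e → ∀ m : M, c e m = 0) ∧
    ((∀ a : R, ∃ b : R, a + b + a = a) →
      (∀ r : R, (∀ m : M, c r m = 0) → r = 0) →
      (∀ e : R, e + e = e → e = 0) ∧ (∀ a : R, ∃ b : R, a + b = 0)) := by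
  have key : ∀ e : R, e + e = e → ∀ m : M, c e m = 0 := by
    intro e he m
    apply hcanc _ _ (c e m)
    rw [← hcadd, he, zero_add]
  refine ⟨key, fun hreg hfaith => ⟨fun e he => hfaith e (key e he), fun a => ?_⟩⟩
  obtain ⟨b, hb⟩ := hreg a
  refine ⟨b, hfaith _ (key _ ?_)⟩
  calc a + b + (a + b) = a + b + a + b := by rw [← add_assoc]
    _ = a + b := by rw [hb]
end

section
/- Let M be a simple left R-semimodule over a hemiring R and I an ideal of R with IM ≠ 0. Then M, regarded as a left I-semimodule, is again simple: it has only trivial I-subsemimodules and only trivial I-semimodule congruences, and IM ≠ 0. -/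
/-- If `M` is a simple left semimodule over a hemiring `R` and `I` is an
ideal of `R` with `IM ≠ 0`, then `M` is simple as a left `I`-semimodule: `IM ≠ 0`,
`M` has only trivial `I`-subsemimodules, and only trivial `I`-semimodule congruences. -/
theorem stmt_4 {R M : Type*} [NonUnitalSemiring R] [AddCommMonoid M]
    (c : R → M → M)
    (hcadd : ∀ r r' m, c (r + r') m = c r m + c r' m)
    (hcmul : ∀ r r' m, c (r * r') m = c r (c r' m))
    (hcdist : ∀ r m m', c r (m + m') = c r m + c r m')
    (hc0 : ∀ r, c r 0 = 0) (hc0' : ∀ m, c 0 m = 0)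
    -- `M` is a simple left `R`-semimodule
    (hRM : ∃ r : R, ∃ m : M, c r m ≠ 0)
    (hsub : ∀ N : Set M, (0 : M) ∈ N → (∀ a ∈ N, ∀ b ∈ N, a + b ∈ N) →
      (∀ r : R, ∀ m ∈ N, c r m ∈ N) → N = {0} ∨ N = Set.univ)
    (hcong : ∀ rel : M → M → Prop, Equivalence rel →
      (∀ a b d, rel a b → rel (a + d) (b + d)) →
      (∀ (r : R) a b, rel a b → rel (c r a) (c r b)) →
      (∀ a b, rel a b ↔ a = b) ∨ (∀ a b, rel a b))
    -- `I` is an ideal of `R` with `IM ≠ 0`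
    (I : Set R) (hI0 : (0 : R) ∈ I)
    (hIadd : ∀ a ∈ I, ∀ b ∈ I, a + b ∈ I)
    (hIl : ∀ r : R, ∀ a ∈ I, r * a ∈ I)
    (hIr : ∀ r : R, ∀ a ∈ I, a * r ∈ I)
    (hIM : ∃ a ∈ I, ∃ m : M, c a m ≠ 0) :
    (∃ a ∈ I, ∃ m : M, c a m ≠ 0) ∧
    (∀ N : Set M, (0 : M) ∈ N → (∀ a ∈ N, ∀ b ∈ N, a + b ∈ N) →
      (∀ a ∈ I, ∀ m ∈ N, c a m ∈ N) → N = {0} ∨ N = Set.univ) ∧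
    (∀ rel : M → M → Prop, Equivalence rel →
      (∀ a b d, rel a b → rel (a + d) (b + d)) →
      (∀ a ∈ I, ∀ m m' : M, rel m m' → rel (c a m) (c a m')) →
      (∀ m m' : M, rel m m' ↔ m = m') ∨ (∀ m m' : M, rel m m')) := by
  -- Step 1: for every nonzero x, some a ∈ I has c a x ≠ 0
  have hK : ∀ x : M, x ≠ 0 → ∃ a ∈ I, c a x ≠ 0 := by
    intro x hx
    by_contra h
    push_neg at h
    have hKset := hsub {y : M | ∀ a ∈ I, c a y = 0}
      (fun a _ => hc0 a)
      (fun u hu v hv a ha => by rw [hcdist, hu a ha, hv a ha, add_zero])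
      (fun r m hm a ha => by rw [← hcmul]; exact hm (a * r) (hIr r a ha))
    rcases hKset with hKs | hKs
    · have : x ∈ {y : M | ∀ a ∈ I, c a y = 0} := h
      rw [hKs] at this
      exact hx this
    · obtain ⟨a, ha, m, hm⟩ := hIM
      have : m ∈ {y : M | ∀ a ∈ I, c a y = 0} := hKs ▸ Set.mem_univ m
      exact hm (this a ha)
  -- Step 2: only trivial I-subsemimodules
  have hSub : ∀ N : Set M, (0 : M) ∈ N → (∀ a ∈ N, ∀ b ∈ N, a + b ∈ N) →
      (∀ a ∈ I, ∀ m ∈ N, c a m ∈ N) → N = {0} ∨ N = Set.univ := by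
    intro N hN0 hNadd hNI
    by_cases hN : N = {0}
    · exact Or.inl hN
    right
    -- pick a nonzero element of N
    obtain ⟨x, hxN, hx0⟩ : ∃ x ∈ N, x ≠ 0 := by
      by_contra h
      push_neg at h
      apply hN
      apply Set.eq_of_subset_of_subset
      · intro y hy; exact h y hy
      · intro y hy; rw [Set.mem_singleton_iff] at hy; rw [hy]; exact hN0
    -- the R-subsemimodule generated by {c a x | a ∈ I}
    set S : AddSubmonoid M := AddSubmonoid.closure {m | ∃ a ∈ I, m = c a x} with hSdef
    have hScl : ∀ r : R, ∀ m ∈ S, c r m ∈ S := by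
      intro r m hm
      induction hm using AddSubmonoid.closure_induction with
      | mem y hy =>
        obtain ⟨a, ha, rfl⟩ := hy
        rw [← hcmul]
        exact AddSubmonoid.subset_closure ⟨r * a, hIl r a ha, rfl⟩
      | zero => rw [hc0]; exact S.zero_mem
      | add u v _ _ hu hv => rw [hcdist]; exact S.add_mem hu hv
    have hSN : (S : Set M) ⊆ N := by
      intro m hm
      induction hm using AddSubmonoid.closure_induction with
      | mem y hy =>
        obtain ⟨a, ha, rfl⟩ := hy
        exact hNI a ha x hxN
      | zero => exact hN0
      | add u v _ _ hu hv => exact hNadd u hu v hv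
    have hStriv := hsub S S.zero_mem (fun a ha b hb => S.add_mem ha hb) hScl
    obtain ⟨a, ha, hax⟩ := hK x hx0
    have hmemS : c a x ∈ S := AddSubmonoid.subset_closure ⟨a, ha, rfl⟩
    rcases hStriv with hS | hS
    · exfalso; apply hax
      have h2 : c a x ∈ (S : Set M) := hmemS
      rw [hS] at h2
      exact h2
    · apply Set.eq_univ_of_univ_subset
      intro m _
      apply hSN
      rw [show (S : Set M) = Set.univ from hS]
      trivial
  refine ⟨hIM, hSub, ?_⟩
  -- Step 3: congruences
  intro rel hequiv hadd hI
  -- rel₂ is an R-congruence containing rel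
  set rel₂ : M → M → Prop := fun x y => ∀ a ∈ I, rel (c a x) (c a y) with hrel₂
  have hsubrel : ∀ x y, rel x y → rel₂ x y := fun x y h a ha => hI a ha x y h
  have hequiv₂ : Equivalence rel₂ := by
    constructor
    · exact fun x a _ => hequiv.refl _
    · exact fun h a ha => hequiv.symm (h a ha)
    · exact fun h h' a ha => hequiv.trans (h a ha) (h' a ha)
  have hadd₂ : ∀ x y d, rel₂ x y → rel₂ (x + d) (y + d) := by
    intro x y d h a ha
    rw [hcdist, hcdist]
    exact hadd _ _ _ (h a ha)
  have hsmul₂ : ∀ (r : R) x y, rel₂ x y → rel₂ (c r x) (c r y) := by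
    intro r x y h a ha
    rw [← hcmul, ← hcmul]
    exact h (a * r) (hIr r a ha)
  rcases hcong rel₂ hequiv₂ hadd₂ hsmul₂ with hdiag | htot
  · left
    intro m m'
    constructor
    · intro h
      exact (hdiag m m').mp (hsubrel m m' h)
    · rintro rfl
      exact hequiv.refl m
  · right
    -- T = {x | rel x 0} is an I-subsemimodule containing all c a m, hence T = univ
    have hT := hSub {x : M | rel x 0} (hequiv.refl 0)
      (fun u hu v hv => by
        have h1 : rel (u + v) v := by
          have := hadd u 0 v hu
          rwa [zero_add] at this
        exact hequiv.trans h1 hv)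
      (fun a ha m hm => by
        have := hI a ha m 0 hm
        rwa [hc0] at this)
    obtain ⟨a, ha, m, hm⟩ := hIM
    have hcam : rel (c a m) 0 := by
      have := htot m 0 a ha
      rwa [hc0] at this
    rcases hT with hTs | hTs
    · exfalso
      apply hm
      have : c a m ∈ {x : M | rel x 0} := hcam
      rw [hTs] at this
      exact this
    · have hall : ∀ x : M, rel x 0 := by
        intro x
        have : x ∈ {x : M | rel x 0} := hTs ▸ Set.mem_univ x
        exact this
      exact fun m m' => hequiv.trans (hall m) (hequiv.symm (hall m'))
end

section
/- Let M be a join semilattice with zero, and for a, b ∈ M define e_{a,b} : M → M by e_{a,b}(x) = 0 if x ≤ a and e_{a,b}(x) = b otherwise. Then each e_{a,b} is an endomorphism of the monoid (M, ∨, 0), and the additive submonoid F_M of End(M) generated by all e_{a,b} is a left ideal of the endomorphism semiring End(M); if M is finite, F_M is a two-sided ideal. -/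
section Aux

variable {M : Type*} [SemilatticeSup M] [OrderBot M]

private lemma stmt5_foldr_init (l : List M) (c : M) :
    l.foldr (· ⊔ ·) c = l.foldr (· ⊔ ·) ⊥ ⊔ c := by
  induction l with
  | nil => simp
  | cons a t ih => simp [List.foldr_cons, ih, sup_assoc]

private lemma stmt5_S_bot {α : Type*} (l : List α) (f : α → M)
    (h : ∀ p ∈ l, f p = ⊥) : (l.map f).foldr (· ⊔ ·) ⊥ = ⊥ := by
  induction l with
  | nil => simp
  | cons a t ih =>
    simp only [List.map_cons, List.foldr_cons, h a (by simp),
      ih fun p hp => h p (by simp [hp]), bot_sup_eq]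

private lemma stmt5_S_sup {α : Type*} (l : List α) (u v w : α → M)
    (h : ∀ p ∈ l, w p = u p ⊔ v p) :
    (l.map w).foldr (· ⊔ ·) ⊥ =
      (l.map u).foldr (· ⊔ ·) ⊥ ⊔ (l.map v).foldr (· ⊔ ·) ⊥ := by
  induction l with
  | nil => simp
  | cons a t ih =>
    simp only [List.map_cons, List.foldr_cons, h a (by simp),
      ih fun p hp => h p (by simp [hp]), sup_sup_sup_comm]

private lemma stmt5_map_foldr (g : M → M) (hb : g ⊥ = ⊥)
    (hs : ∀ x y : M, g (x ⊔ y) = g x ⊔ g y) (l : List M) :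
    g (l.foldr (· ⊔ ·) ⊥) = (l.map g).foldr (· ⊔ ·) ⊥ := by
  induction l with
  | nil => simpa using hb
  | cons a t ih => simp [hs, ih]

private lemma stmt5_g_finset_sup (g : M → M) (hb : g ⊥ = ⊥)
    (hs : ∀ x y : M, g (x ⊔ y) = g x ⊔ g y) (s : Finset M) :
    g (s.sup id) = s.sup g := by
  classical
  induction s using Finset.induction with
  | empty => simpa using hb
  | insert a s hni ih => simp [Finset.sup_insert, hs, ih]

end Aux

open Classical in
/-- For a join semilattice `M` with zero, each map
`e_{a,b}(x) = 0 if x ≤ a, else b` is an endomorphism of `(M, ∨, 0)`; the additive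
submonoid `F` of `End(M)` generated by the `e_{a,b}` (realized as finite pointwise
joins of such maps) is a left ideal of the endomorphism semiring, and a two-sided
ideal when `M` is finite. -/
theorem stmt_5 {M : Type*} [SemilatticeSup M] [OrderBot M] :
    let e : M → M → M → M := fun a b x => if x ≤ a then ⊥ else b
    let E : Set (M → M) := {f | f ⊥ = ⊥ ∧ ∀ x y : M, f (x ⊔ y) = f x ⊔ f y}
    let F : Set (M → M) := {f | ∃ l : List (M × M),
      ∀ x : M, f x = (l.map fun p => e p.1 p.2 x).foldr (· ⊔ ·) ⊥}
    -- each `e a b` is an endomorphism, and a generator of `F`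
    (∀ a b : M, e a b ∈ E) ∧ (∀ a b : M, e a b ∈ F) ∧
    -- `F` is an additive submonoid of `End(M)` consisting of endomorphisms
    (F ⊆ E) ∧ ((fun _ : M => (⊥ : M)) ∈ F) ∧
    (∀ f ∈ F, ∀ g ∈ F, (fun x => f x ⊔ g x) ∈ F) ∧
    -- `F` is a left ideal of `End(M)`
    (∀ g ∈ E, ∀ f ∈ F, g ∘ f ∈ F) ∧
    -- and a two-sided ideal when `M` is finite
    (Finite M → ∀ g ∈ E, ∀ f ∈ F, f ∘ g ∈ F) := by
  intro e E F
  refine ⟨?_, ?_, ?_, ?_, ?_, ?_, ?_⟩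
  · -- each e a b ∈ E
    intro a b
    refine ⟨by simp [e], fun x y => ?_⟩
    by_cases hx : x ≤ a <;> by_cases hy : y ≤ a <;>
      simp [e, sup_le_iff, hx, hy]
  · -- e a b ∈ F
    intro a b
    exact ⟨[(a, b)], fun x => by simp [e]⟩
  · -- F ⊆ E
    rintro f ⟨l, hl⟩
    constructor
    · rw [hl]
      exact stmt5_S_bot l _ fun p _ => by simp [e]
    · intro x y
      rw [hl, hl, hl]
      refine stmt5_S_sup l _ _ _ fun p _ => ?_
      by_cases hx : x ≤ p.1 <;> by_cases hy : y ≤ p.1 <;>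
        simp [e, sup_le_iff, hx, hy]
  · exact ⟨[], fun x => by simp⟩
  · -- closed under pointwise sup
    rintro f ⟨lf, hf⟩ g ⟨lg, hg⟩
    refine ⟨lf ++ lg, fun x => ?_⟩
    simp only [hf, hg, List.map_append, List.foldr_append]
    exact (stmt5_foldr_init _ _).symm
  · -- left ideal
    rintro g ⟨hgb, hgs⟩ f ⟨l, hl⟩
    refine ⟨l.map fun p => (p.1, g p.2), fun x => ?_⟩
    simp only [Function.comp_apply, hl]
    rw [stmt5_map_foldr g hgb hgs, List.map_map, List.map_map]
    congr 1
    refine List.map_congr_left fun p _ => ?_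
    simp only [Function.comp_apply, e]
    split <;> simp [hgb]
  · -- right ideal when finite
    intro hfin g hg f hf
    obtain ⟨hgb, hgs⟩ := hg
    obtain ⟨l, hl⟩ := hf
    letI := Fintype.ofFinite M
    have gmono : Monotone g := fun x y hxy => by
      have := hgs x y
      rw [sup_eq_right.mpr hxy] at this
      rw [this]; exact le_sup_left
    set A : M → M := fun a => (Finset.univ.filter fun x => g x ≤ a).sup id with hA
    have hA_iff : ∀ a x : M, g x ≤ a ↔ x ≤ A a := by
      intro a x
      constructor
      · intro h
        exact Finset.le_sup (f := id) (Finset.mem_filter.mpr ⟨Finset.mem_univ x, h⟩)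
      · intro h
        have hgA : g (A a) ≤ a := by
          rw [hA]
          rw [stmt5_g_finset_sup g hgb hgs]
          exact Finset.sup_le fun y hy => (Finset.mem_filter.mp hy).2
        exact le_trans (gmono h) hgA
    refine ⟨l.map fun p => (A p.1, p.2), fun x => ?_⟩
    simp only [Function.comp_apply, hl, List.map_map]
    congr 1
    refine List.map_congr_left fun p _ => ?_
    simp only [Function.comp_apply, e]
    by_cases h : g x ≤ p.1
    · rw [if_pos h, if_pos ((hA_iff p.1 x).mp h)]
    · rw [if_neg h, if_neg (fun hc => h ((hA_iff p.1 x).mpr hc))]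
end

section
/- Let S be an ideal of a hemiring R and ρ a congruence on S such that S/ρ is a semiring with identity element ē (the class of e ∈ S). Define a relation ρ̄ on R by (a,b) ∈ ρ̄ iff (eae, ebe) ∈ ρ. Then ρ̄ is a hemiring congruence on R containing ρ, and the map φ : R/ρ̄ → S/ρ given by r̄ ↦ class of ere is a hemiring isomorphism. -/
/-- Let `S` be an ideal of a hemiring `R` and `ρ` a congruence on `S`
such that `S/ρ` is a semiring with identity the class of `e ∈ S`. Then
`ρ̄ := {(a,b) | (eae, ebe) ∈ ρ}` is a hemiring congruence on `R` containing `ρ`, and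
`r̄ ↦ class of ere` defines an isomorphism `R/ρ̄ ≅ S/ρ` (it is well-defined and
injective by the definition of `ρ̄`, surjective, additive, and multiplicative). -/
theorem stmt_6 {R : Type*} [NonUnitalSemiring R]
    (S : Set R) (hS0 : (0 : R) ∈ S) (hSadd : ∀ a ∈ S, ∀ b ∈ S, a + b ∈ S)
    (hSl : ∀ r : R, ∀ a ∈ S, r * a ∈ S) (hSr : ∀ r : R, ∀ a ∈ S, a * r ∈ S)
    (ρ : R → R → Prop)
    (hdom : ∀ a b : R, ρ a b → a ∈ S ∧ b ∈ S)
    (hrefl : ∀ a ∈ S, ρ a a) (hsymm : ∀ a b : R, ρ a b → ρ b a)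
    (htrans : ∀ a b d : R, ρ a b → ρ b d → ρ a d)
    (haddc : ∀ a b d : R, ρ a b → d ∈ S → ρ (a + d) (b + d))
    (hmulc : ∀ a b d : R, ρ a b → d ∈ S → ρ (d * a) (d * b) ∧ ρ (a * d) (b * d))
    (e : R) (he : e ∈ S)
    (hid : ∀ x ∈ S, ρ (e * x) x ∧ ρ (x * e) x) :
    let ρb : R → R → Prop := fun a b => ρ (e * a * e) (e * b * e)
    -- `ρ̄` is a congruence on `R`
    Equivalence ρb ∧
    (∀ a b d : R, ρb a b → ρb (a + d) (b + d)) ∧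
    (∀ a b d : R, ρb a b → ρb (d * a) (d * b) ∧ ρb (a * d) (b * d)) ∧
    -- `ρ ⊆ ρ̄`
    (∀ a b : R, ρ a b → ρb a b) ∧
    -- `φ : R/ρ̄ → S/ρ`, `r̄ ↦ [ere]`, is a bijective hemiring homomorphism
    (∀ a : R, e * a * e ∈ S) ∧
    (∀ a b : R, ρ (e * a * e) (e * b * e) ↔ ρb a b) ∧
    (∀ s ∈ S, ∃ r : R, ρ (e * r * e) s) ∧
    (∀ a b : R, ρ (e * (a + b) * e) (e * a * e + e * b * e)) ∧
    (∀ a b : R, ρ (e * (a * b) * e) ((e * a * e) * (e * b * e))) := by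
  intro ρb
  have hae : ∀ a : R, a * e ∈ S := fun a => hSl a e he
  have hea : ∀ a : R, e * a ∈ S := fun a => hSr a e he
  have hmem : ∀ a : R, e * a * e ∈ S := fun a => hSl (e * a) e he
  refine ⟨⟨fun a => hrefl _ (hmem a), fun h => hsymm _ _ h,
    fun h1 h2 => htrans _ _ _ h1 h2⟩, ?_, ?_, ?_, hmem, fun a b => Iff.rfl, ?_, ?_, ?_⟩
  · intro a b d h
    show ρ (e * (a + d) * e) (e * (b + d) * e)
    rw [show e * (a + d) * e = e * a * e + e * d * e by rw [mul_add, add_mul],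
        show e * (b + d) * e = e * b * e + e * d * e by rw [mul_add, add_mul]]
    exact haddc _ _ _ h (hmem d)
  · intro a b d h
    constructor
    · show ρ (e * (d * a) * e) (e * (d * b) * e)
      have h1 : ρ (e * d * (e * (a * e))) (e * d * (a * e)) :=
        (hmulc _ _ (e * d) ((hid (a * e) (hae a)).1) (hea d)).1
      have h2 : ρ (e * d * (e * (b * e))) (e * d * (b * e)) :=
        (hmulc _ _ (e * d) ((hid (b * e) (hae b)).1) (hea d)).1
      have h3 : ρ (e * d * (e * a * e)) (e * d * (e * b * e)) :=
        (hmulc _ _ (e * d) h (hea d)).1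
      simp only [mul_assoc] at h1 h2 h3 ⊢
      exact htrans _ _ _ (hsymm _ _ h1) (htrans _ _ _ h3 h2)
    · show ρ (e * (a * d) * e) (e * (b * d) * e)
      have h1 : ρ (e * a * e * (d * e)) (e * a * (d * e)) :=
        (hmulc _ _ (d * e) ((hid (e * a) (hea a)).2) (hSl d e he)).2
      have h2 : ρ (e * b * e * (d * e)) (e * b * (d * e)) :=
        (hmulc _ _ (d * e) ((hid (e * b) (hea b)).2) (hSl d e he)).2
      have h3 : ρ (e * a * e * (d * e)) (e * b * e * (d * e)) :=
        (hmulc _ _ (d * e) h (hSl d e he)).2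
      simp only [mul_assoc] at h1 h2 h3 ⊢
      exact htrans _ _ _ (hsymm _ _ h1) (htrans _ _ _ h3 h2)
  · intro a b h
    exact (hmulc _ _ e (hmulc _ _ e h he).1 he).2
  · intro s hs
    exact ⟨s, htrans _ _ _ ((hmulc _ _ e ((hid s hs).1) he).2) ((hid s hs).2)⟩
  · intro a b
    rw [mul_add, add_mul]
    exact hrefl _ (hSadd _ (hmem a) _ (hmem b))
  · intro a b
    have k1 : ρ (e * a * (e * (e * (b * e)))) (e * a * (e * (b * e))) :=
      (hmulc _ _ (e * a) ((hid (e * (b * e)) (hea (b * e))).1) (hea a)).1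
    have k2 : ρ (e * a * (e * (b * e))) (e * a * (b * e)) :=
      (hmulc _ _ (e * a) ((hid (b * e) (hae b)).1) (hea a)).1
    simp only [mul_assoc] at k1 k2 ⊢
    exact hsymm _ _ (htrans _ _ _ k1 k2)
end

section
/- Let R be a hemiring and S a congruence-simple quotient of R possessing a left identity r̄ ≠ 0̄ (i.e., r̄x̄ = x̄ for all x̄ ∈ S). Then the relation γ := {(x,y) ∈ S² | x·r̄ = y·r̄} is a congruence on S, hence γ is the diagonal, and therefore r̄ is a two-sided identity of S. -/
/-- Let `S` be a congruence-simple quotient of a hemiring `R` (presented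
by a surjective hemiring homomorphism `π : R → S`) possessing a left identity
`r ≠ 0`. Then `γ := {(x,y) | x * r = y * r}` is a congruence on `S`, hence `γ` is the
diagonal, and therefore `r` is a two-sided identity of `S`. -/
theorem stmt_8 {R S : Type*} [NonUnitalSemiring R] [NonUnitalSemiring S]
    (π : R → S) (hsurj : Function.Surjective π)
    (hπ0 : π 0 = 0) (hπadd : ∀ a b : R, π (a + b) = π a + π b)
    (hπmul : ∀ a b : R, π (a * b) = π a * π b)
    (hcs : ∀ rel : S → S → Prop, Equivalence rel →
      (∀ a b d, rel a b → rel (a + d) (b + d)) →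
      (∀ a b d, rel a b → rel (d * a) (d * b) ∧ rel (a * d) (b * d)) →
      (∀ a b, rel a b ↔ a = b) ∨ (∀ a b, rel a b))
    (r : S) (hr : r ≠ 0) (hlid : ∀ x : S, r * x = x) :
    let γ : S → S → Prop := fun x y => x * r = y * r
    Equivalence γ ∧
    (∀ a b d : S, γ a b → γ (a + d) (b + d)) ∧
    (∀ a b d : S, γ a b → γ (d * a) (d * b) ∧ γ (a * d) (b * d)) ∧
    (∀ x y : S, γ x y ↔ x = y) ∧
    (∀ x : S, x * r = x) := by
  intro γ
  have hequiv : Equivalence γ := ⟨fun _ => rfl, fun h => h.symm, fun h1 h2 => h1.trans h2⟩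
  have hadd : ∀ a b d : S, γ a b → γ (a + d) (b + d) := by
    intro a b d h
    show (a + d) * r = (b + d) * r
    rw [add_mul, add_mul, h]
  have hmul : ∀ a b d : S, γ a b → γ (d * a) (d * b) ∧ γ (a * d) (b * d) := by
    intro a b d h
    constructor
    · show d * a * r = d * b * r
      rw [mul_assoc, mul_assoc, h]
    · show a * d * r = b * d * r
      calc a * d * r = a * (r * (d * r)) := by rw [hlid, mul_assoc]
        _ = a * r * (d * r) := by rw [← mul_assoc]
        _ = b * r * (d * r) := by rw [h]
        _ = b * d * r := by rw [mul_assoc, hlid, ← mul_assoc]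
  rcases hcs γ hequiv hadd hmul with hd | hall
  · refine ⟨hequiv, hadd, hmul, hd, fun x => ?_⟩
    have : γ (x * r) x := by
      show x * r * r = x * r
      rw [mul_assoc, hlid]
    exact (hd _ _).mp this
  · exfalso
    apply hr
    have h := hall r 0
    have : r * r = 0 * r := h
    rwa [hlid, zero_mul] at this
end

section
/- Let S be a lattice-ordered hemiring which is congruence-simple and has an identity element r̄ ≠ 0̄. Then S is ideal-simple: its only ideals are 0 and S. (Proof idea: for a nonzero ideal I, the Bourne congruence of I equals S², yielding an element b̄ ∈ I with b̄ = r̄ + ā where ā = r̄ā ≤ r̄, so r̄ ∈ I and I = S.) -/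
/-- A lattice-ordered hemiring `S` (`a + b = a ⊔ b`, `a * b ≤ a ⊓ b`)
which is congruence-simple and has an identity element `r ≠ 0` is ideal-simple:
its only ideals are `0` and `S`. -/
theorem stmt_9 {S : Type*} [NonUnitalSemiring S] [Lattice S]
    (hadd : ∀ a b : S, a + b = a ⊔ b)
    (hmul : ∀ a b : S, a * b ≤ a ⊓ b)
    (hcs : ∀ rel : S → S → Prop, Equivalence rel →
      (∀ a b d, rel a b → rel (a + d) (b + d)) →
      (∀ a b d, rel a b → rel (d * a) (d * b) ∧ rel (a * d) (b * d)) →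
      (∀ a b, rel a b ↔ a = b) ∨ (∀ a b, rel a b))
    (r : S) (hr : r ≠ 0) (hid : ∀ x : S, r * x = x ∧ x * r = x) :
    ∀ I : Set S, (0 : S) ∈ I → (∀ a ∈ I, ∀ b ∈ I, a + b ∈ I) →
      (∀ s : S, ∀ a ∈ I, s * a ∈ I) → (∀ s : S, ∀ a ∈ I, a * s ∈ I) →
      I = {0} ∨ I = Set.univ := by
  intro I h0 hplus hsl hsr
  have comm : ∀ a b : S, a + b = b + a := by
    intro a b; rw [hadd, hadd, sup_comm]
  set rel : S → S → Prop := fun a b => ∃ u ∈ I, ∃ v ∈ I, a + u = b + v with hrel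
  have hequiv : Equivalence rel := by
    constructor
    · intro a; exact ⟨0, h0, 0, h0, rfl⟩
    · rintro a b ⟨u, hu, v, hv, h⟩; exact ⟨v, hv, u, hu, h.symm⟩
    · rintro a b c ⟨u, hu, v, hv, h1⟩ ⟨u', hu', v', hv', h2⟩
      refine ⟨u + u', hplus u hu u' hu', v' + v, hplus v' hv' v hv, ?_⟩
      calc a + (u + u') = (a + u) + u' := by rw [add_assoc]
        _ = (b + v) + u' := by rw [h1]
        _ = (b + u') + v := by rw [add_assoc, add_assoc, comm v u']
        _ = (c + v') + v := by rw [h2]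
        _ = c + (v' + v) := by rw [add_assoc]
  have haddc : ∀ a b d, rel a b → rel (a + d) (b + d) := by
    rintro a b d ⟨u, hu, v, hv, h⟩
    refine ⟨u, hu, v, hv, ?_⟩
    calc a + d + u = (a + u) + d := by rw [add_assoc, add_assoc, comm d u]
      _ = (b + v) + d := by rw [h]
      _ = b + d + v := by rw [add_assoc, add_assoc, comm v d]
  have hmulc : ∀ a b d, rel a b → rel (d * a) (d * b) ∧ rel (a * d) (b * d) := by
    rintro a b d ⟨u, hu, v, hv, h⟩
    constructor
    · exact ⟨d * u, hsl d u hu, d * v, hsl d v hv, by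
        rw [← mul_add, ← mul_add, h]⟩
    · exact ⟨u * d, hsr d u hu, v * d, hsr d v hv, by
        rw [← add_mul, ← add_mul, h]⟩
  rcases hcs rel hequiv haddc hmulc with hdiag | huniv
  · left
    ext x
    simp only [Set.mem_singleton_iff]
    constructor
    · intro hx
      have : rel 0 x := ⟨x, hx, 0, h0, by rw [zero_add, add_zero]⟩
      exact ((hdiag 0 x).mp this).symm
    · rintro rfl; exact h0
  · right
    -- from rel r 0 get r ∈ I
    obtain ⟨u, hu, v, hv, h⟩ := huniv r 0
    rw [zero_add] at h
    have hur : u ≤ r := by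
      have := hmul r u
      rw [(hid u).1] at this
      exact this.trans inf_le_left
    have hru : r + u = r := by rw [hadd]; exact sup_eq_left.mpr hur
    have hrI : r ∈ I := by rw [← hru, h]; exact hv
    ext x
    simp only [Set.mem_univ, iff_true]
    have := hsl x r hrI
    rwa [(hid x).2] at this
end

section
/- Let M be a cancellative left R-semimodule over a hemiring R. Then M is w-finitely generated if and only if its module of differences D(M) is a finitely generated left D(R)-module. -/
/-- `M` is a w-finitely generated left semimodule (w.r.t. the action `c`). -/
def WFinGen {R M : Type*} [NonUnitalSemiring R] [AddCommMonoid M] (c : R → M → M) : Prop :=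
  ∃ (n : ℕ) (a b : Fin n → M), ∀ m : M, ∃ r s : Fin n → R,
    m + ∑ i, (c (r i) (b i) + c (s i) (a i)) = ∑ i, (c (r i) (a i) + c (s i) (b i))

/-- The module of differences `D(M)` is a finitely generated `D(R)`-module: there are
classes of pairs `(aᵢ, bᵢ)` such that every difference `m - m'` is a `D(R)`-linear
combination `∑ (rᵢ - sᵢ)(aᵢ - bᵢ)`, expressed elementwise in `M` (for cancellative
`M`, equality of classes in `D(M)` is the stated equality in `M`). -/
def DiffModFinGen {R M : Type*} [NonUnitalSemiring R] [AddCommMonoid M] (c : R → M → M) : Prop :=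
  ∃ (n : ℕ) (a b : Fin n → M), ∀ m m' : M, ∃ r s : Fin n → R,
    m + ∑ i, (c (r i) (b i) + c (s i) (a i)) = m' + ∑ i, (c (r i) (a i) + c (s i) (b i))

/-- A cancellative left semimodule `M` over a hemiring `R` is w-finitely
generated iff its module of differences `D(M)` is a finitely generated `D(R)`-module. -/
theorem stmt_11 {R M : Type*} [NonUnitalSemiring R] [AddCommMonoid M]
    (c : R → M → M)
    (hcadd : ∀ r r' m, c (r + r') m = c r m + c r' m)
    (hcmul : ∀ r r' m, c (r * r') m = c r (c r' m))
    (hcdist : ∀ r m m', c r (m + m') = c r m + c r m')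
    (hc0 : ∀ r, c r 0 = 0) (hc0' : ∀ m, c 0 m = 0)
    (hcanc : ∀ x y z : M, x + z = y + z → x = y) :
    WFinGen c ↔ DiffModFinGen c := by
  constructor
  · rintro ⟨n, a, b, h⟩
    refine ⟨n, a, b, fun m m' => ?_⟩
    obtain ⟨r, s, hm⟩ := h m
    obtain ⟨r', s', hm'⟩ := h m'
    refine ⟨fun i => r i + s' i, fun i => s i + r' i, ?_⟩
    have L : ∑ i, (c (r i + s' i) (b i) + c (s i + r' i) (a i)) =
        (∑ i, (c (r i) (b i) + c (s i) (a i))) + ∑ i, (c (r' i) (a i) + c (s' i) (b i)) := by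
      rw [← Finset.sum_add_distrib]
      refine Finset.sum_congr rfl fun i _ => ?_
      rw [hcadd, hcadd]; abel
    have Rr : ∑ i, (c (r i + s' i) (a i) + c (s i + r' i) (b i)) =
        (∑ i, (c (r i) (a i) + c (s i) (b i))) + ∑ i, (c (r' i) (b i) + c (s' i) (a i)) := by
      rw [← Finset.sum_add_distrib]
      refine Finset.sum_congr rfl fun i _ => ?_
      rw [hcadd, hcadd]; abel
    rw [L, Rr, ← add_assoc, hm, ← hm']
    abel
  · rintro ⟨n, a, b, h⟩
    refine ⟨n, a, b, fun m => ?_⟩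
    obtain ⟨r, s, hr⟩ := h m 0
    exact ⟨r, s, by rwa [zero_add] at hr⟩
end

section
/- Let H be an additively cancellative commutative semiring which is not a ring and whose semiring of differences D(H) is a field. Then H is zerosumfree (a + b = 0 implies a = b = 0) and entire (has no zero divisors), and the map f : H → B sending 0 to 0 and every nonzero element to 1 is a surjective semiring homomorphism to the Boolean semifield B with trivial kernel. -/
open Classical in
/-- Let `H` be an additively cancellative commutative semiring which is
not a ring and whose ring of differences `D(H)` is a field (expressed: `0 ≠ 1` and
every nonzero difference `a - b` has an inverse `c - d`). Then `H` is zerosumfree and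
entire, and `f : H → B` (with `B` the Boolean semifield, modeled by `Bool` with `‖`
and `&&`) sending `0 ↦ 0` and each nonzero element to `1` is a surjective semiring
homomorphism with trivial kernel. -/
theorem stmt_14 {H : Type*} [CommSemiring H]
    (hcanc : ∀ a b d : H, a + d = b + d → a = b)
    (hnotring : ∃ a : H, ¬ ∃ b : H, a + b = 0)
    (hnt : (0 : H) ≠ 1)
    (hfield : ∀ a b : H, a ≠ b → ∃ cc d : H, a * cc + b * d = 1 + (a * d + b * cc)) :
    let f : H → Bool := fun h => if h = 0 then false else true
    -- zerosumfree
    (∀ a b : H, a + b = 0 → a = 0 ∧ b = 0) ∧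
    -- entire
    (∀ a b : H, a * b = 0 → a = 0 ∨ b = 0) ∧
    -- the semiisomorphism onto the Boolean semifield
    (f 0 = false ∧ f 1 = true ∧
      (∀ a b : H, f (a + b) = (f a || f b)) ∧
      (∀ a b : H, f (a * b) = (f a && f b)) ∧
      Function.Surjective f ∧ (∀ a : H, f a = false → a = 0)) := by
  intro f
  -- key: every nonzero element is "invertible up to a difference"
  have key : ∀ a : H, a ≠ 0 → ∃ c d : H, a * c = 1 + a * d := by
    intro a ha
    obtain ⟨c, d, h⟩ := hfield a 0 ha
    exact ⟨c, d, by simpa using h⟩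
  -- zerosumfree helper
  have zsf0 : ∀ a b : H, a + b = 0 → a = 0 := by
    intro a b hab
    by_contra ha
    obtain ⟨c, d, h⟩ := key a ha
    have h0 : a * c + b * c = 0 := by rw [← add_mul, hab, zero_mul]
    have h2 : 1 + (a * d + b * c) = 0 := by
      rw [← add_assoc, ← h]; exact h0
    obtain ⟨x, hx⟩ := hnotring
    refine hx ⟨x * (a * d + b * c), ?_⟩
    calc x + x * (a * d + b * c) = x * (1 + (a * d + b * c)) := by ring
      _ = 0 := by rw [h2, mul_zero]
  have zsf : ∀ a b : H, a + b = 0 → a = 0 ∧ b = 0 := by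
    intro a b hab
    exact ⟨zsf0 a b hab, zsf0 b a (by rwa [add_comm])⟩
  -- entire
  have ent : ∀ a b : H, a * b = 0 → a = 0 ∨ b = 0 := by
    intro a b hab
    by_cases ha : a = 0
    · exact Or.inl ha
    · right
      obtain ⟨c, d, h⟩ := key a ha
      have h3 : (a * b) * c = b + (a * b) * d := by
        calc (a * b) * c = (a * c) * b := by ring
          _ = (1 + a * d) * b := by rw [h]
          _ = b + (a * b) * d := by ring
      rw [hab, zero_mul, zero_mul] at h3
      have := h3.symm
      simpa using this
  refine ⟨zsf, ent, by simp [f], by simp [f, Ne.symm hnt], ?_, ?_, ?_, ?_⟩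
  · intro a b
    by_cases ha : a = 0
    · by_cases hb : b = 0 <;> simp [f, ha, hb]
    · have hab : a + b ≠ 0 := fun h => ha (zsf a b h).1
      simp [f, ha, hab]
  · intro a b
    by_cases ha : a = 0
    · simp [f, ha]
    · by_cases hb : b = 0
      · simp [f, ha, hb]
      · have hab : a * b ≠ 0 := fun h => (ent a b h).elim ha hb
        simp [f, ha, hb, hab]
  · intro y
    cases y
    · exact ⟨0, by simp [f]⟩
    · exact ⟨1, by simp [f, Ne.symm hnt]⟩
  · intro a ha
    by_contra h
    simp [f, h] at ha
end

section
/- Let R be a left artinian semiring (descending chain condition on left ideals) with the additively cancellative quotient R* = R/≡ (where r ≡ s iff r + x = s + x for some x ∈ R) and suppose 1 ∉ Z(R). If J is a two-sided ideal of R* such that for every finitely generated left R*-semimodule N, J·N = N implies N = 0 (Nakayama property), then there exists n ∈ ℕ with Jⁿ = 0. (Hopkins-type lemma: a descending chain J ⊇ J² ⊇ ... stabilizes, and a minimal left ideal I with JⁿI ≠ 0 yields Jx = R*x for some x, contradicting the Nakayama property.) -/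
open Submodule

namespace Stmt18Aux

variable {S : Type} [Semiring S]

/-- Products of `k` elements of `J`. -/
def prodSet (J : Set S) (k : ℕ) : Set S :=
  {s : S | ∃ f : Fin k → S, (∀ i, f i ∈ J) ∧ (List.ofFn f).prod = s}

lemma prodSet_zero (J : Set S) : prodSet J 0 = {1} := by
  ext z
  constructor
  · rintro ⟨f, -, rfl⟩; simp
  · rintro rfl; exact ⟨Fin.elim0, fun i => i.elim0, by simp⟩

lemma prodSet_one (J : Set S) : prodSet J 1 = J := by
  ext z
  constructor
  · rintro ⟨f, hf, rfl⟩; simpa using hf 0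
  · intro hz; exact ⟨fun _ => z, fun _ => hz, by simp⟩

lemma prodSet_succ (J : Set S) (k : ℕ) :
    prodSet J (k + 1) = {z : S | ∃ j ∈ J, ∃ t ∈ prodSet J k, z = j * t} := by
  ext z
  constructor
  · rintro ⟨f, hf, rfl⟩
    exact ⟨f 0, hf 0, (List.ofFn fun i => f i.succ).prod,
      ⟨_, fun i => hf i.succ, rfl⟩, by rw [List.ofFn_succ, List.prod_cons]⟩
  · rintro ⟨j, hj, t, ⟨f, hf, rfl⟩, rfl⟩
    refine ⟨Fin.cons j f, fun i => ?_, ?_⟩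
    · refine Fin.cases (by simpa using hj) (fun i => by simpa using hf i) i
    · rw [List.ofFn_succ, List.prod_cons]; simp

lemma prodSet_add (J : Set S) (a b : ℕ) :
    prodSet J (a + b) = {z : S | ∃ t ∈ prodSet J a, ∃ u ∈ prodSet J b, z = t * u} := by
  induction a with
  | zero =>
    ext z
    simp only [Nat.zero_add, prodSet_zero, Set.mem_setOf_eq, Set.mem_singleton_iff]
    constructor
    · intro hz; exact ⟨1, rfl, z, hz, (one_mul z).symm⟩
    · rintro ⟨t, rfl, u, hu, rfl⟩; rwa [one_mul]
  | succ a ih =>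
    have : a + 1 + b = (a + b) + 1 := by omega
    rw [this, prodSet_succ, prodSet_succ]
    ext z
    simp only [Set.mem_setOf_eq, ih]
    constructor
    · rintro ⟨j, hj, t, ⟨t', ht', u, hu, rfl⟩, rfl⟩
      exact ⟨j * t', ⟨j, hj, t', ht', rfl⟩, u, hu, (mul_assoc _ _ _).symm⟩
    · rintro ⟨t, ⟨j, hj, t', ht', rfl⟩, u, hu, rfl⟩
      exact ⟨j, hj, t' * u, ⟨t', ht', u, hu, rfl⟩, mul_assoc _ _ _⟩

/-- if `A` is closed under right multiplication, multiplying a member of `A` with a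
member of `span B` lands in the span of pairwise products. -/
lemma mul_span_mem {A B : Set S} (hA : ∀ a ∈ A, ∀ s : S, a * s ∈ A)
    {y : S} (hy : y ∈ span S B) :
    ∀ a ∈ A, a * y ∈ span S {z : S | ∃ a ∈ A, ∃ b ∈ B, z = a * b} := by
  induction hy using span_induction with
  | mem b hb => exact fun a ha => subset_span ⟨a, ha, b, hb, rfl⟩
  | zero => intro a _; simp
  | add u v _ _ ihu ihv =>
    intro a ha; rw [mul_add]; exact add_mem (ihu a ha) (ihv a ha)
  | smul s u _ ih =>
    intro a ha
    rw [smul_eq_mul, ← mul_assoc]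
    exact ih (a * s) (hA a ha s)

lemma span_mul_span {A B : Set S} (hA : ∀ a ∈ A, ∀ s : S, a * s ∈ A) :
    span S {z : S | ∃ a ∈ A, ∃ y ∈ span S B, z = a * y} =
      span S {z : S | ∃ a ∈ A, ∃ b ∈ B, z = a * b} := by
  apply le_antisymm
  · rw [span_le]
    rintro z ⟨a, ha, y, hy, rfl⟩
    exact mul_span_mem hA hy a ha
  · apply span_mono
    rintro z ⟨a, ha, b, hb, rfl⟩
    exact ⟨a, ha, b, subset_span hb, rfl⟩

end Stmt18Aux

open Submodule Stmt18Aux in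
/-- Hopkins-type lemma: Let `R` be a left artinian semiring with
`1 ∉ Z(R)`, and let `R*` (presented as a semiring `S` with a surjective homomorphism
`π : R → S` whose kernel pair is the congruence `r ≡ s ↔ ∃ x, r + x = s + x`) be its
additively cancellative quotient. If `J` is a two-sided ideal of `S = R*` such that
for every finitely generated left `S`-semimodule `N`, `J·N = N` implies `N = 0`
(Nakayama property), then `Jⁿ = 0` for some `n`: every product of `n` elements of `J`
vanishes. -/
theorem stmt_18 {R S : Type} [Semiring R] [Semiring S]
    (π : R →+* S) (hπsurj : Function.Surjective π)
    (hπker : ∀ r s : R, π r = π s ↔ ∃ x : R, r + x = s + x)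
    -- `R` is left artinian: descending chains of left ideals stabilize
    (hart : ∀ c : ℕ → Set R,
      (∀ k, (0 : R) ∈ c k ∧ (∀ a ∈ c k, ∀ b ∈ c k, a + b ∈ c k) ∧
        (∀ r : R, ∀ a ∈ c k, r * a ∈ c k)) →
      (∀ k, c (k + 1) ⊆ c k) → ∃ n, ∀ m, n ≤ m → c m = c n)
    -- `1 ∉ Z(R)`
    (hz : ¬ ∃ x : R, 1 + x = x)
    -- `J` is a two-sided ideal of `S`
    (J : Set S) (hJ0 : (0 : S) ∈ J)
    (hJadd : ∀ a ∈ J, ∀ b ∈ J, a + b ∈ J)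
    (hJmul : ∀ s : S, ∀ a ∈ J, s * a ∈ J ∧ a * s ∈ J)
    -- Nakayama property of `J`
    (hNak : ∀ (N : Type) [AddCommMonoid N] [Module S N], Module.Finite S N →
      Submodule.span S {x : N | ∃ j ∈ J, ∃ y : N, x = j • y} = ⊤ → ∀ x : N, x = 0) :
    ∃ n : ℕ, ∀ f : Fin n → S, (∀ i, f i ∈ J) → (List.ofFn f).prod = 0 := by
  classical
  -- Step 1: transfer the artinian condition to submodules of `S`.
  have hartS : ∀ c : ℕ → Submodule S S, (∀ k, c (k + 1) ≤ c k) →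
      ∃ n, ∀ m, n ≤ m → c m = c n := by
    intro c hc
    obtain ⟨n, hn⟩ := hart (fun k => π ⁻¹' (c k : Set S))
      (fun k => ⟨by simp [Set.mem_preimage], fun a ha b hb => by
          simp only [Set.mem_preimage, map_add] at *
          exact (c k).add_mem ha hb,
        fun r a ha => by
          simp only [Set.mem_preimage, map_mul] at *
          exact (c k).smul_mem (π r) ha⟩)
      (fun k z hz => hc k hz)
    exact ⟨n, fun m hm => SetLike.coe_injective
      (hπsurj.preimage_injective (hn m hm))⟩
  -- Step 2: every nonempty family of submodules has a minimal element.
  have hmin : ∀ 𝒮 : Set (Submodule S S), 𝒮.Nonempty →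
      ∃ L ∈ 𝒮, ∀ L' ∈ 𝒮, L' ≤ L → L' = L := by
    rintro 𝒮 ⟨L0, hL0⟩
    by_contra h
    push_neg at h
    choose F hF1 hF2 hF3 using h
    let seq : ℕ → {L // L ∈ 𝒮} := fun k =>
      Nat.rec ⟨L0, hL0⟩ (fun _ p => ⟨F p.1 p.2, hF1 p.1 p.2⟩) k
    obtain ⟨n, hn⟩ := hartS (fun k => (seq k).1) (fun k => hF2 _ _)
    exact hF3 (seq n).1 (seq n).2 (hn (n + 1) (Nat.le_succ n))
  -- Step 3: the descending chain of powers of `J` stabilizes.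
  have hPdesc : ∀ k, Submodule.span S (prodSet J (k + 1)) ≤ Submodule.span S (prodSet J k) := by
    intro k
    rw [prodSet_succ, span_le]
    rintro z ⟨j, hj, t, ht, rfl⟩
    exact (Submodule.span S (prodSet J k)).smul_mem j (subset_span ht)
  obtain ⟨n₀, hn₀⟩ := hartS (fun k => Submodule.span S (prodSet J k)) hPdesc
  refine ⟨n₀ + 1, ?_⟩
  set n := n₀ + 1 with hn
  have hstab : ∀ m, n ≤ m →
      Submodule.span S (prodSet J m) = Submodule.span S (prodSet J n) := fun m hm =>
    (hn₀ m (le_trans (Nat.le_succ n₀) hm)).trans (hn₀ n (Nat.le_succ n₀)).symm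
  -- `prodSet J n` is closed under right multiplication.
  have hclosed : ∀ a ∈ prodSet J n, ∀ s : S, a * s ∈ prodSet J n := by
    intro a ha s
    rw [hn, prodSet_add] at ha ⊢
    obtain ⟨t, ht, u, hu, rfl⟩ := ha
    rw [prodSet_one] at hu ⊢
    exact ⟨t, ht, u * s, (hJmul s u hu).2, mul_assoc t u s⟩
  -- The "multiply by the ideal Jⁿ" operator on submodules.
  let IM : Submodule S S → Submodule S S := fun M =>
    Submodule.span S {z : S | ∃ a ∈ prodSet J n, ∃ y ∈ M, z = a * y}
  have hIMspan : ∀ B : Set S, IM (Submodule.span S B) =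
      Submodule.span S {z : S | ∃ a ∈ prodSet J n, ∃ b ∈ B, z = a * b} := fun B =>
    span_mul_span hclosed
  -- products of two elements of `prodSet n` span `P n` again
  have hPnPn : Submodule.span S {z : S | ∃ a ∈ prodSet J n, ∃ b ∈ prodSet J n, z = a * b} =
      Submodule.span S (prodSet J n) := by
    have h2n : {z : S | ∃ a ∈ prodSet J n, ∃ b ∈ prodSet J n, z = a * b} =
        prodSet J (n + n) := by
      ext z
      rw [prodSet_add J n n]
    rw [h2n]
    exact hstab (n + n) (Nat.le_add_left n n)
  have hIMPn : IM (Submodule.span S (prodSet J n)) = Submodule.span S (prodSet J n) := by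
    rw [hIMspan, hPnPn]
  -- `IM` of a cyclic submodule is the image of `P n` under right multiplication.
  have hρ : ∀ x : S, IM (Submodule.span S {x}) =
      Submodule.map (LinearMap.toSpanSingleton S S x) (Submodule.span S (prodSet J n)) := by
    intro x
    rw [hIMspan, Submodule.map_span]
    congr 1
    ext z
    simp only [Set.mem_setOf_eq, Set.mem_image, LinearMap.toSpanSingleton_apply,
      smul_eq_mul, Set.mem_singleton_iff]
    constructor
    · rintro ⟨a, ha, b, rfl, rfl⟩; exact ⟨a, ha, rfl⟩
    · rintro ⟨a, ha, rfl⟩; exact ⟨a, ha, x, rfl, rfl⟩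
  have hIMρ : ∀ x : S,
      IM (Submodule.map (LinearMap.toSpanSingleton S S x) (Submodule.span S (prodSet J n))) =
      Submodule.map (LinearMap.toSpanSingleton S S x) (Submodule.span S (prodSet J n)) := by
    intro x
    rw [Submodule.map_span, hIMspan]
    have himg : {z : S | ∃ a ∈ prodSet J n,
        ∃ b ∈ (LinearMap.toSpanSingleton S S x) '' prodSet J n, z = a * b} =
        (LinearMap.toSpanSingleton S S x) ''
          {z : S | ∃ a ∈ prodSet J n, ∃ b ∈ prodSet J n, z = a * b} := by
      ext z
      simp only [Set.mem_setOf_eq, Set.mem_image, LinearMap.toSpanSingleton_apply, smul_eq_mul]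
      constructor
      · rintro ⟨a, ha, b, ⟨t, ht, rfl⟩, rfl⟩
        exact ⟨a * t, ⟨a, ha, t, ht, rfl⟩, mul_assoc a t x⟩
      · rintro ⟨w, ⟨a, ha, t, ht, rfl⟩, rfl⟩
        exact ⟨a, ha, t * x, ⟨t, ht, rfl⟩, mul_assoc a t x⟩
    rw [himg, ← Submodule.map_span, hPnPn]
    exact Submodule.map_span _ _
  -- Main claim: `span (prodSet J n) = ⊥`.
  suffices hbot : Submodule.span S (prodSet J n) = ⊥ by
    intro f hf
    have hmem : (List.ofFn f).prod ∈ Submodule.span S (prodSet J n) :=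
      subset_span ⟨f, hf, rfl⟩
    rwa [hbot, Submodule.mem_bot] at hmem
  by_contra hPn
  -- take a minimal submodule `L` with `IM L ≠ ⊥`
  obtain ⟨L, hL𝒮, hLmin⟩ := hmin {L : Submodule S S | IM L ≠ ⊥} ⟨Submodule.span S (prodSet J n),
    by simp only [Set.mem_setOf_eq, hIMPn]; exact hPn⟩
  simp only [Set.mem_setOf_eq] at hL𝒮
  -- find `x ∈ L` with `IM (span {x}) ≠ ⊥`
  have hex : ∃ x ∈ L, IM (Submodule.span S {x}) ≠ ⊥ := by
    by_contra hx
    push_neg at hx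
    apply hL𝒮
    rw [← le_bot_iff, span_le]
    rintro z ⟨a, ha, y, hy, rfl⟩
    have hz' : a * y ∈ IM (Submodule.span S {y}) :=
      subset_span ⟨a, ha, y, mem_span_singleton_self y, rfl⟩
    rwa [hx y hy, Submodule.mem_bot] at hz'
  obtain ⟨x, hxL, hxne⟩ := hex
  set L' : Submodule S S :=
    Submodule.map (LinearMap.toSpanSingleton S S x) (Submodule.span S (prodSet J n)) with hL'
  have hL'IM : IM (Submodule.span S {x}) = L' := hρ x
  -- `L' ≤ L`
  have hL'le : L' ≤ L := by
    rw [hL']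
    intro z hz
    rw [Submodule.mem_map] at hz
    obtain ⟨w, hw, rfl⟩ := hz
    simpa using L.smul_mem w hxL
  -- by minimality, `L' = L`, hence `x ∈ L'`
  have hL'𝒮 : IM L' ≠ ⊥ := by
    rw [hL', hIMρ x, ← hL', ← hL'IM]
    exact hxne
  have hL'eq : L' = L := hLmin L' hL'𝒮 hL'le
  have hxL' : x ∈ L' := hL'eq ▸ hxL
  -- the cyclic module `N = span {x}` satisfies `J·N = N`
  set N : Submodule S S := Submodule.span S {x} with hN
  have hJN : Submodule.span S {z : S | ∃ j ∈ J, ∃ y ∈ N, z = j * y} = N := by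
    apply le_antisymm
    · rw [span_le]
      rintro z ⟨j, hj, y, hy, rfl⟩
      exact N.smul_mem j hy
    · rw [hN, span_le, Set.singleton_subset_iff]
      -- `x ∈ L' = span {t * x : t ∈ prodSet J n}` and each `t * x = j * (t' * x)`
      rw [hL', Submodule.map_span] at hxL'
      refine span_le.mpr ?_ hxL'
      rintro z ⟨t, ht, rfl⟩
      rw [hn, prodSet_succ] at ht
      obtain ⟨j, hj, t', ht', rfl⟩ := ht
      simp only [LinearMap.toSpanSingleton_apply, smul_eq_mul, mul_assoc]
      exact subset_span ⟨j, hj, t' * x, N.smul_mem t' (mem_span_singleton_self x), rfl⟩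
  -- lift to the subtype and apply Nakayama
  have hNtop : Submodule.span S {w : ↥N | ∃ j ∈ J, ∃ y : ↥N, w = j • y} = ⊤ := by
    apply Submodule.map_injective_of_injective (Submodule.injective_subtype N)
    rw [Submodule.map_span, Submodule.map_top, Submodule.range_subtype]
    have hset : N.subtype '' {w : ↥N | ∃ j ∈ J, ∃ y : ↥N, w = j • y} =
        {z : S | ∃ j ∈ J, ∃ y ∈ N, z = j * y} := by
      ext z
      constructor
      · rintro ⟨w, ⟨j, hj, y, rfl⟩, rfl⟩
        exact ⟨j, hj, (y : S), y.2, by simp [smul_eq_mul]⟩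
      · rintro ⟨j, hj, y, hy, rfl⟩
        exact ⟨j • (⟨y, hy⟩ : ↥N), ⟨j, hj, ⟨y, hy⟩, rfl⟩, by simp [smul_eq_mul]⟩
    rw [hset, hJN]
  have hx0 : x = 0 := by
    have hfin : Module.Finite S ↥N := by
      rw [hN]
      infer_instance
    have := hNak ↥N hfin hNtop ⟨x, mem_span_singleton_self x⟩
    simpa using congrArg (N.subtype) this
  -- contradiction: `IM (span {x}) = ⊥`
  apply hxne
  rw [hN, hx0]
  rw [← le_bot_iff, span_le]
  rintro z ⟨a, ha, y, hy, rfl⟩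
  rw [Submodule.span_zero_singleton, Submodule.mem_bot] at hy
  simp [hy]
end
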